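/- arXiv:cond-mat/9906008 — 2 statements merged into one kernel-verified Lean document; each statement's English description precedes it below -/
import Mathlib

section
/- The Dyson–Lieb–Simon function f, defined by f(u·tanh(u)) = tanh(u)/u for u > 0, is convex on (0,∞). -/
/-!
The graph of `f` is the curve `u ↦ (X u, Y u) = (u tanh u, tanh u / u)`, `u > 0`, whose first
coordinate increases from `0` to `∞`. Its slope `dY/dX` is
`dlsSlope u = (u - sinh u cosh u) / (u² (u + sinh u cosh u))`, whose derivative has the sign of
`sinh² u cosh u + u sinh u - 2 u² cosh u ≥ 0` (by `sinh u ≥ u + u³/6` and `tanh u ≥ u - u³/3`).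
A curve with increasing slope lies above each of its tangent lines, and a function whose graph lies
above a line through each of its points is convex.
-/

open Real Set

namespace Real

theorem hasDerivAt_tanh (x : ℝ) : HasDerivAt tanh (cosh x ^ 2)⁻¹ x := by
  have h := (hasDerivAt_sinh x).div (hasDerivAt_cosh x) (cosh_pos x).ne'
  rw [show tanh = sinh / cosh from funext tanh_eq_sinh_div_cosh]
  refine h.congr_deriv ?_
  rw [← sq, ← sq, cosh_sq_sub_sinh_sq, one_div]

theorem add_pow_three_div_six_le_sinh {x : ℝ} (hx : 0 ≤ x) : x + x ^ 3 / 6 ≤ sinh x := by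
  have := sum_le_hasSum (Finset.range 2) (fun n _ => by positivity) (hasSum_sinh x)
  norm_num [Finset.sum_range_succ, Nat.factorial] at this
  linarith

theorem sinh_le_mul_cosh {x : ℝ} (hx : 0 ≤ x) : sinh x ≤ x * cosh x := by
  refine hasSum_le (fun n => ?_) (hasSum_sinh x) ((hasSum_cosh x).mul_left x)
  rw [pow_succ, mul_div_assoc', mul_comm]
  gcongr
  omega

theorem sub_pow_three_div_three_mul_cosh_le_sinh {x : ℝ} (hx : 0 ≤ x) :
    (x - x ^ 3 / 3) * cosh x ≤ sinh x := by
  let F := fun y => sinh y - (y - y ^ 3 / 3) * cosh y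
  have hF : ∀ y, HasDerivAt F (y * (y * cosh y - sinh y) + y ^ 3 / 3 * sinh y) y := fun y => by
    refine ((hasDerivAt_sinh y).sub (((hasDerivAt_id y).sub
      ((hasDerivAt_pow 3 y).div_const 3)).mul (hasDerivAt_cosh y))).congr_deriv ?_
    simp only [Pi.sub_apply, id]
    ring
  have hmono : MonotoneOn F (Ici 0) := by
    refine monotoneOn_of_hasDerivWithinAt_nonneg (convex_Ici 0)
      (fun y _ => (hF y).continuousAt.continuousWithinAt) (fun y _ => (hF y).hasDerivWithinAt) ?_
    rw [interior_Ici]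
    intro y (hy : 0 < y)
    have := sub_nonneg.2 (sinh_le_mul_cosh hy.le)
    have := sinh_nonneg_iff.2 hy.le
    positivity
  have := hmono self_mem_Ici hx hx
  simp only [F, sinh_zero, cosh_zero] at this
  linarith

theorem two_mul_sq_mul_cosh_le {x : ℝ} (hx : 0 ≤ x) :
    2 * x ^ 2 * cosh x ≤ sinh x ^ 2 * cosh x + x * sinh x := by
  have hsinh := add_pow_three_div_six_le_sinh hx
  have hsq : x ^ 2 + x ^ 4 / 3 ≤ sinh x ^ 2 := by
    nlinarith [pow_le_pow_left₀ (by positivity) hsinh 2, pow_nonneg hx 6]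
  calc 2 * x ^ 2 * cosh x = (x ^ 2 + x ^ 4 / 3) * cosh x + x * ((x - x ^ 3 / 3) * cosh x) := by
        ring
    _ ≤ sinh x ^ 2 * cosh x + x * sinh x := by
        have := cosh_pos x
        gcongr
        exact sub_pow_three_div_three_mul_cosh_le_sinh hx

end Real

theorem add_mul_sub_le_of_hasDerivAt_of_monotoneOn {D : Set ℝ} (hD : D.OrdConnected)
    {X Y X' M : ℝ → ℝ} (hX : ∀ u ∈ D, HasDerivAt X (X' u) u)
    (hY : ∀ u ∈ D, HasDerivAt Y (M u * X' u) u) (hX' : ∀ u ∈ D, 0 ≤ X' u) (hM : MonotoneOn M D)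
    {a b : ℝ} (ha : a ∈ D) (hb : b ∈ D) : Y a + M a * (X b - X a) ≤ Y b := by
  let F := fun u => Y u - M a * X u
  have hF : ∀ u ∈ D, HasDerivAt F ((M u - M a) * X' u) u := fun u hu =>
    ((hY u hu).sub ((hX u hu).const_mul (M a))).congr_deriv (by ring)
  suffices F a ≤ F b by simp only [F] at this; linarith
  rcases le_total a b with hab | hba
  · have hsub : Icc a b ⊆ D := hD.out ha hb
    refine monotoneOn_of_hasDerivWithinAt_nonneg (convex_Icc a b)
      (fun u hu => (hF u (hsub hu)).continuousAt.continuousWithinAt)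
      (fun u hu => (hF u (hsub (interior_subset hu))).hasDerivWithinAt) (fun u hu => ?_)
      (left_mem_Icc.2 hab) (right_mem_Icc.2 hab) hab
    rw [interior_Icc] at hu
    have hu' := hsub (Ioo_subset_Icc_self hu)
    exact mul_nonneg (sub_nonneg.2 (hM ha hu' hu.1.le)) (hX' u hu')
  · have hsub : Icc b a ⊆ D := hD.out hb ha
    refine antitoneOn_of_hasDerivWithinAt_nonpos (convex_Icc b a)
      (fun u hu => (hF u (hsub hu)).continuousAt.continuousWithinAt)
      (fun u hu => (hF u (hsub (interior_subset hu))).hasDerivWithinAt) (fun u hu => ?_)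
      (left_mem_Icc.2 hba) (right_mem_Icc.2 hba) hba
    rw [interior_Icc] at hu
    have hu' := hsub (Ioo_subset_Icc_self hu)
    exact mul_nonpos_of_nonpos_of_nonneg (sub_nonpos.2 (hM hu' ha hu.2.le)) (hX' u hu')

theorem convexOn_of_forall_exists_add_mul_sub_le {S : Set ℝ} {f : ℝ → ℝ} (hS : Convex ℝ S)
    (h : ∀ z ∈ S, ∃ m, ∀ w ∈ S, f z + m * (w - z) ≤ f w) : ConvexOn ℝ S f := by
  refine ⟨hS, fun x hx y hy α β hα hβ hαβ => ?_⟩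
  obtain ⟨m, hm⟩ := h _ (hS hx hy hα hβ hαβ)
  have hx' := mul_le_mul_of_nonneg_left (hm x hx) hα
  have hy' := mul_le_mul_of_nonneg_left (hm y hy) hβ
  simp only [smul_eq_mul] at *
  linear_combination hx' + hy' - (f (α * x + β * y) - m * (α * x + β * y)) * hαβ

noncomputable def dlsSlope (u : ℝ) : ℝ := (u - sinh u * cosh u) / (u ^ 2 * (u + sinh u * cosh u))

theorem hasDerivAt_dlsSlope {u : ℝ} (hu : 0 < u) :
    HasDerivAt dlsSlope (2 * u * cosh u * (sinh u ^ 2 * cosh u + u * sinh u - 2 * u ^ 2 * cosh u)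
      / (u ^ 2 * (u + sinh u * cosh u)) ^ 2) u := by
  have hsc : HasDerivAt (fun v => sinh v * cosh v) (cosh u * cosh u + sinh u * sinh u) u :=
    (hasDerivAt_sinh u).mul (hasDerivAt_cosh u)
  have hden : u ^ 2 * (u + sinh u * cosh u) ≠ 0 := by
    have := sinh_pos_iff.2 hu
    have := cosh_pos u
    positivity
  refine (((hasDerivAt_id u).sub hsc).div ((hasDerivAt_pow 2 u).mul ((hasDerivAt_id u).add hsc))
    hden).congr_deriv ?_
  congr 1
  simp only [Pi.mul_apply, Pi.add_apply, Pi.sub_apply, id]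
  linear_combination 2 * u ^ 3 * cosh_sq_sub_sinh_sq u

theorem monotoneOn_dlsSlope : MonotoneOn dlsSlope (Ioi 0) := by
  refine monotoneOn_of_hasDerivWithinAt_nonneg (convex_Ioi 0)
    (fun u hu => (hasDerivAt_dlsSlope hu).continuousAt.continuousWithinAt)
    (fun u hu => (hasDerivAt_dlsSlope (interior_subset hu)).hasDerivWithinAt) fun u hu => ?_
  rw [interior_Ioi, mem_Ioi] at hu
  have hc := cosh_pos u
  exact div_nonneg (mul_nonneg (by positivity) (sub_nonneg.2 (two_mul_sq_mul_cosh_le hu.le)))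
    (sq_nonneg _)

theorem hasDerivAt_mul_tanh (u : ℝ) :
    HasDerivAt (fun v => v * tanh v) ((u + sinh u * cosh u) / cosh u ^ 2) u := by
  refine ((hasDerivAt_id u).mul (hasDerivAt_tanh u)).congr_deriv ?_
  have := (cosh_pos u).ne'
  rw [id, tanh_eq_sinh_div_cosh]
  field_simp
  ring

theorem hasDerivAt_tanh_div {u : ℝ} (hu : 0 < u) :
    HasDerivAt (fun v => tanh v / v) (dlsSlope u * ((u + sinh u * cosh u) / cosh u ^ 2)) u := by
  refine ((hasDerivAt_tanh u).div (hasDerivAt_id u) hu.ne').congr_deriv ?_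
  have := (cosh_pos u).ne'
  have : u + sinh u * cosh u ≠ 0 := by
    have := sinh_pos_iff.2 hu
    have := cosh_pos u
    positivity
  rw [dlsSlope, id, tanh_eq_sinh_div_cosh]
  field_simp

theorem sub_one_le_mul_tanh {u : ℝ} (hu : 0 ≤ u) : u - 1 ≤ u * tanh u := by
  have hexp : u * exp (-u) ≤ 1 := by
    rw [exp_neg, ← div_eq_mul_inv, div_le_one (exp_pos u)]
    linarith [add_one_le_exp u]
  rw [tanh_eq_sinh_div_cosh, mul_div_assoc', le_div_iff₀ (cosh_pos u)]
  nlinarith [cosh_sub_sinh u, one_le_cosh u]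

theorem exists_mul_tanh_eq {z : ℝ} (hz : 0 < z) : ∃ u, 0 < u ∧ u * tanh u = z := by
  have hcont : Continuous fun u => u * tanh u :=
    continuous_iff_continuousAt.2 fun u => (hasDerivAt_mul_tanh u).continuousAt
  have hz1 : z ≤ (z + 1) * tanh (z + 1) := by
    linarith [sub_one_le_mul_tanh (by linarith : 0 ≤ z + 1)]
  obtain ⟨u, ⟨hu0, -⟩, hu⟩ := intermediate_value_Icc (by linarith : (0 : ℝ) ≤ z + 1)
    hcont.continuousOn ⟨by simpa using hz.le, hz1⟩
  refine ⟨u, hu0.lt_of_ne ?_, hu⟩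
  rintro rfl
  simp [hz.ne] at hu

/-- The DLS function `f`, defined by `f (u * tanh u) = tanh u / u` for `u > 0`,
is convex on `(0,∞)`. -/
theorem dls_convex (f : ℝ → ℝ)
    (hf : ∀ u : ℝ, 0 < u → f (u * Real.tanh u) = Real.tanh u / u) :
    ConvexOn ℝ (Set.Ioi 0) f := by
  have hX' : ∀ u ∈ Ioi (0 : ℝ), 0 ≤ (u + sinh u * cosh u) / cosh u ^ 2 := fun u (hu : 0 < u) => by
    have := sinh_pos_iff.2 hu
    have := cosh_pos u
    exact (div_pos (by positivity) (by positivity)).le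
  refine convexOn_of_forall_exists_add_mul_sub_le (convex_Ioi 0) fun z hz => ?_
  obtain ⟨a, ha, rfl⟩ := exists_mul_tanh_eq hz
  refine ⟨dlsSlope a, fun w hw => ?_⟩
  obtain ⟨b, hb, rfl⟩ := exists_mul_tanh_eq hw
  rw [hf a ha, hf b hb]
  exact add_mul_sub_le_of_hasDerivAt_of_monotoneOn ordConnected_Ioi
    (fun u _ => hasDerivAt_mul_tanh u) (fun _ hu => hasDerivAt_tanh_div hu) hX'
    monotoneOn_dlsSlope ha hb
end

section
/- Let h : positive reals → positive reals and suppose ⟨ρ⟩ ≥ |Λ|·δ for some δ > 0. If κ√⟨s⟩ ≥ g√(⟨ρ⟩·f(4βd/⟨ρ⟩)) − √(κ/β) with f the DLS function (f continuous at 0+ with limit 1), then for |Λ| large enough, ⟨s⟩ ≥ |Λ|·(g²δ/(2κ²)) − o(|Λ|); in particular ⟨s⟩ grows proportionally to |Λ|, i.e. long-range order in ρ implies long-range order in s. -/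
/-! Since `⟨ρ⟩ ≥ δ|Λ| → ∞`, the argument `4βd/⟨ρ⟩` of `f` tends to `0⁺`, so `f(4βd/⟨ρ⟩) → 1`.
Hence `g√(⟨ρ⟩ f) - √(κ/β) = g√⟨ρ⟩ (√f - o(1))` eventually exceeds `g√(θ⟨ρ⟩)` for any `θ < 1`,
and squaring `κ√⟨s⟩ ≥ g√(θ⟨ρ⟩)` with `θ = 1/2` gives `κ²⟨s⟩ ≥ g²δ|Λ|/2`. -/

open Filter Topology

theorem Filter.Tendsto.const_div_atTop_nhdsGT {α : Type*} {l : Filter α} {u : α → ℝ}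
    (hu : Tendsto u l atTop) {a : ℝ} (ha : 0 < a) :
    Tendsto (fun x => a / u x) l (𝓝[>] 0) :=
  tendsto_nhdsWithin_iff.2
    ⟨hu.const_div_atTop a, (hu.eventually_gt_atTop 0).mono fun _ hx => div_pos ha hx⟩

theorem eventually_mul_le_of_sub_le_mul_sqrt {α : Type*} {l : Filter α} {ρ F s : α → ℝ}
    {g κ C θ : ℝ} (hg : 0 < g) (hθ₀ : 0 ≤ θ) (hθ₁ : θ < 1)
    (hρ : Tendsto ρ l atTop) (hF : Tendsto F l (𝓝 1))
    (h : ∀ x, g * Real.sqrt (ρ x * F x) - C ≤ κ * Real.sqrt (s x)) :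
    ∀ᶠ x in l, θ * g ^ 2 * ρ x ≤ κ ^ 2 * s x := by
  have hgap : Tendsto (fun x => Real.sqrt (ρ x) * (g * (Real.sqrt (F x) - Real.sqrt θ))) l atTop := by
    refine (Real.tendsto_sqrt_atTop.comp hρ).atTop_mul_pos ?_ ((hF.sqrt.sub_const _).const_mul g)
    exact mul_pos hg (sub_pos.2 (Real.sqrt_lt_sqrt hθ₀ hθ₁))
  filter_upwards [hgap.eventually_gt_atTop C, hρ.eventually_ge_atTop 0] with x hx hρx
  set a := g * Real.sqrt θ * Real.sqrt (ρ x)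
  have ha : 0 ≤ a := by positivity
  have has : a < κ * Real.sqrt (s x) := by
    refine lt_of_lt_of_le ?_ (h x)
    rw [Real.sqrt_mul hρx]
    linarith
  -- `Real.sqrt` is `0` on `s x ≤ 0`, which the strict inequality above rules out.
  have hs : 0 < s x := by
    by_contra! hs
    rw [Real.sqrt_eq_zero'.2 hs, mul_zero] at has
    exact has.not_ge ha
  calc θ * g ^ 2 * ρ x = a ^ 2 := by
        simp only [a, mul_pow, Real.sq_sqrt hθ₀, Real.sq_sqrt hρx]; ring
    _ ≤ (κ * Real.sqrt (s x)) ^ 2 := pow_le_pow_left₀ ha has.le 2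
    _ = κ ^ 2 * s x := by rw [mul_pow, Real.sq_sqrt hs.le]

theorem lro_transfer_general (f : ℝ → ℝ)
    (hf_lim : Tendsto f (nhdsWithin 0 (Set.Ioi 0)) (nhds 1))
    (κ g β d δ : ℝ) (hκ : 0 < κ) (hg : 0 < g) (hβ : 0 < β) (hd : 0 < d)
    (hδ : 0 < δ) (s ρ : ℕ → ℝ)
    (hρ : ∀ V : ℕ, δ * V ≤ ρ V)
    (hineq : ∀ V : ℕ,
      g * Real.sqrt (ρ V * f (4 * β * d / ρ V)) - Real.sqrt (κ / β)
        ≤ κ * Real.sqrt (s V)) :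
    ∃ V₀ : ℕ, ∀ V : ℕ, V₀ ≤ V → (g ^ 2 * δ / (2 * κ ^ 2)) * V ≤ s V := by
  have hρ_top : Tendsto ρ atTop atTop :=
    tendsto_atTop_mono hρ (tendsto_natCast_atTop_atTop.const_mul_atTop hδ)
  have hf_one : Tendsto (fun V => f (4 * β * d / ρ V)) atTop (𝓝 1) :=
    hf_lim.comp (hρ_top.const_div_atTop_nhdsGT (by positivity))
  obtain ⟨V₀, hV₀⟩ := eventually_atTop.1 <|
    eventually_mul_le_of_sub_le_mul_sqrt hg (by norm_num : (0 : ℝ) ≤ 1 / 2) (by norm_num)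
      hρ_top hf_one hineq
  refine ⟨V₀, fun V hV => ?_⟩
  have key := hV₀ V hV
  rw [div_mul_eq_mul_div, div_le_iff₀ (by positivity)]
  nlinarith [hρ V, sq_nonneg g]

/-- Long-range order in `ρ` implies long-range order in `s`: with the DLS
function `f` (decreasing, with values in `(0,1)` and limit `1` at `0⁺`), if
`⟨ρ⟩ ≥ δ|Λ|` and `κ√⟨s⟩ ≥ g√(⟨ρ⟩ f(4βd/⟨ρ⟩)) − √(κ/β)`, then for `|Λ|`
large enough `⟨s⟩ ≥ (g²δ/(2κ²))|Λ|`, i.e. `⟨s⟩` grows proportionally to `|Λ|`. -/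
theorem lro_transfer (f : ℝ → ℝ)
    (hf_mem : ∀ t : ℝ, 0 < t → f t ∈ Set.Ioo (0 : ℝ) 1)
    (hf_anti : StrictAntiOn f (Set.Ioi 0))
    (hf_lim : Tendsto f (nhdsWithin 0 (Set.Ioi 0)) (nhds 1))
    (κ g β d δ : ℝ) (hκ : 0 < κ) (hg : 0 < g) (hβ : 0 < β) (hd : 0 < d)
    (hδ : 0 < δ) (s ρ : ℕ → ℝ) (hs : ∀ V, 0 ≤ s V)
    (hρ : ∀ V : ℕ, δ * V ≤ ρ V)
    (hineq : ∀ V : ℕ,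
      g * Real.sqrt (ρ V * f (4 * β * d / ρ V)) - Real.sqrt (κ / β)
        ≤ κ * Real.sqrt (s V)) :
    ∃ V₀ : ℕ, ∀ V : ℕ, V₀ ≤ V → (g ^ 2 * δ / (2 * κ ^ 2)) * V ≤ s V :=
  lro_transfer_general f hf_lim κ g β d δ hκ hg hβ hd hδ s ρ hρ hineq
end
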